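/- Let m ≥ 2 be an integer, let k₁, k₂ be real numbers, and let r > 0 satisfy 4k₁ < π²/r² and k₂ < π²/r². Then (4m−4)·G(k₂, r) + 6·G(k₁, 2r) ≤ (4m−1)·G((12k₁ + (4m−4)k₂)/(4m−1), r). (This is the inequality showing that the quaternion Kähler drift term (4m−4)G(k₂,r) + 6G(k₁,2r) is dominated by the Riemannian drift term with the averaged Ricci lower bound 12k₁ + (4m−4)k₂ in real dimension 4m.) -/

import Mathlib

/-!
Put `T x = tan √x / √x`, continued by `tanh √(-x) / √(-x)` for `x < 0` and by `1` at `0`.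
Then `G k r = -(k r) · T (k r² / 4)`, so doubling is the identity `(4k) r² / 4 = k (2r)² / 4`,
and concavity of `G` in `k` is convexity of `x ↦ x T x` (`= √x tan √x`) on `x < π² / 4`.
Its derivative `(T + 1 + x T²) / 2` equals `(tan u / u + sec² u) / 2` with `u = √x`, resp.
`(tanh v / v + sech² v) / 2` with `v = √(-x)`; it increases because `tan` is convex on
`[0, π/2)` and `tanh` is concave on `[0, ∞)`, and at `x = 0` it is `lim T = 1`.
The theorem is then Jensen's inequality at `4k₁` and `k₂` with weights `3` and `4m - 4`.
-/

open Real

/-- The comparison function `G` from Chen–Wang: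
`G(k,r) = −2√k tan(√k r/2)` for `k > 0`, `G(0,r) = 0`,
and `G(k,r) = 2√|k| tanh(√|k| r/2)` for `k < 0`. -/
noncomputable def G (k r : ℝ) : ℝ :=
  if 0 < k then -2 * Real.sqrt k * Real.tan (Real.sqrt k * r / 2)
  else if k = 0 then 0
  else 2 * Real.sqrt |k| * Real.tanh (Real.sqrt |k| * r / 2)

open Set Filter Topology

namespace Real

theorem hasDerivAt_tanh (x : ℝ) : HasDerivAt tanh (1 - tanh x ^ 2) x := by
  have h := (hasDerivAt_sinh x).div (hasDerivAt_cosh x) (cosh_pos x).ne'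
  rw [show sinh / cosh = tanh from funext fun y => (tanh_eq_sinh_div_cosh y).symm] at h
  refine h.congr_deriv ?_
  rw [tanh_eq_sinh_div_cosh]
  field_simp

theorem strictMono_tanh : StrictMono tanh :=
  strictMono_of_deriv_pos fun x => by
    rw [(hasDerivAt_tanh x).deriv]; linarith [tanh_sq_lt_one x]

theorem tanh_nonneg {x : ℝ} (hx : 0 ≤ x) : 0 ≤ tanh x :=
  tanh_zero ▸ strictMono_tanh.monotone hx

theorem tanh_le_self {x : ℝ} (hx : 0 ≤ x) : tanh x ≤ x := by
  have hderiv (y : ℝ) : HasDerivAt (fun y => y - tanh y) (tanh y ^ 2) y :=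
    ((hasDerivAt_id' y).fun_sub (hasDerivAt_tanh y)).congr_deriv (by ring)
  have hmono : Monotone fun y => y - tanh y :=
    monotone_of_deriv_nonneg (fun y => (hderiv y).differentiableAt)
      fun y => (hderiv y).deriv ▸ sq_nonneg _
  simpa using hmono hx

theorem concaveOn_tanh : ConcaveOn ℝ (Ici 0) tanh := by
  have hderiv : deriv tanh = fun x => 1 - tanh x ^ 2 :=
    funext fun x => (hasDerivAt_tanh x).deriv
  refine AntitoneOn.concaveOn_of_deriv (convex_Ici 0)
    (fun x _ => (hasDerivAt_tanh x).continuousAt.continuousWithinAt)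
    (fun x _ => (hasDerivAt_tanh x).differentiableAt.differentiableWithinAt) ?_
  rw [hderiv, interior_Ici]
  intro a ha b _ hab
  have := strictMono_tanh.monotone hab
  have := tanh_nonneg (le_of_lt ha)
  dsimp only
  nlinarith

theorem convexOn_tan : ConvexOn ℝ (Ico 0 (π / 2)) tan := by
  have hcos : ∀ x ∈ Ico 0 (π / 2), 0 < cos x := fun x hx =>
    cos_pos_of_mem_Ioo ⟨by linarith [pi_pos, hx.1], hx.2⟩
  refine MonotoneOn.convexOn_of_deriv (convex_Ico 0 (π / 2))
    (continuousOn_tan.mono fun x hx => (hcos x hx).ne')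
    (fun x hx => (hasDerivAt_tan (hcos x (interior_subset hx)).ne').differentiableAt
      |>.differentiableWithinAt) ?_
  rw [interior_Ico]
  intro a ha b hb hab
  simp only [deriv_tan]
  have := cos_le_cos_of_nonneg_of_le_pi ha.1.le (by linarith [hb.2, pi_pos]) hab
  have := hcos b ⟨hb.1.le, hb.2⟩
  gcongr

theorem monotoneOn_tan_div_self : MonotoneOn (fun u => tan u / u) (Ioo 0 (π / 2)) := by
  intro a ha b hb hab
  have := convexOn_tan.secant_mono (a := 0) ⟨le_rfl, pi_div_two_pos⟩ (Ioo_subset_Ico_self ha)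
    (Ioo_subset_Ico_self hb) ha.1.ne' hb.1.ne' hab
  simpa using this

theorem antitoneOn_tanh_div_self : AntitoneOn (fun v => tanh v / v) (Ioi 0) := by
  intro a ha b hb hab
  have := concaveOn_tanh.neg.secant_mono (a := 0) self_mem_Ici (mem_Ici.2 ha.le)
    (mem_Ici.2 hb.le) (ne_of_gt ha) (ne_of_gt hb) hab
  simpa [neg_div] using this

theorem tendsto_tan_div_self : Tendsto (fun u => tan u / u) (𝓝[≠] 0) (𝓝 1) := by
  have := (hasDerivAt_tan (x := 0) (by simp)).tendsto_slope_zero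
  simpa [div_eq_inv_mul] using this

theorem tendsto_tanh_div_self : Tendsto (fun v => tanh v / v) (𝓝[≠] 0) (𝓝 1) := by
  have := (hasDerivAt_tanh 0).tendsto_slope_zero
  simpa [div_eq_inv_mul] using this

end Real

theorem monotoneOn_of_monotoneOn_inter_Iio_Ioi {α β : Type*} [LinearOrder α] [Preorder β]
    {f : α → β} {s : Set α} {c : α}
    (hlt : MonotoneOn f (s ∩ Iio c)) (hgt : MonotoneOn f (s ∩ Ioi c))
    (hle : ∀ x ∈ s, x < c → f x ≤ f c) (hge : ∀ x ∈ s, c < x → f c ≤ f x) :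
    MonotoneOn f s := by
  intro a ha b hb hab
  rcases lt_trichotomy a c with hac | rfl | hca
  · rcases lt_trichotomy b c with hbc | rfl | hcb
    · exact hlt ⟨ha, hac⟩ ⟨hb, hbc⟩ hab
    · exact hle a ha hac
    · exact (hle a ha hac).trans (hge b hb hcb)
  · rcases hab.eq_or_lt with rfl | hab
    · exact le_rfl
    · exact hge b hb hab
  · exact hgt ⟨ha, hca⟩ ⟨hb, hca.trans_le hab⟩ hab

noncomputable def tanSqrtDivSqrt (x : ℝ) : ℝ :=
  if 0 < x then tan √x / √x else if x = 0 then 1 else tanh √(-x) / √(-x)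

section tanSqrtDivSqrt

variable {x : ℝ}

theorem tanSqrtDivSqrt_of_pos (hx : 0 < x) : tanSqrtDivSqrt x = tan √x / √x := if_pos hx

@[simp]
theorem tanSqrtDivSqrt_zero : tanSqrtDivSqrt 0 = 1 := by simp [tanSqrtDivSqrt]

theorem tanSqrtDivSqrt_of_neg (hx : x < 0) : tanSqrtDivSqrt x = tanh √(-x) / √(-x) := by
  rw [tanSqrtDivSqrt, if_neg hx.not_gt, if_neg hx.ne]

theorem mul_tanSqrtDivSqrt_sq_of_pos (hx : 0 < x) : x * tanSqrtDivSqrt x ^ 2 = tan √x ^ 2 := by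
  rw [tanSqrtDivSqrt_of_pos hx, div_pow, sq_sqrt hx.le]
  field_simp

theorem mul_tanSqrtDivSqrt_sq_of_neg (hx : x < 0) :
    x * tanSqrtDivSqrt x ^ 2 = -tanh √(-x) ^ 2 := by
  rw [tanSqrtDivSqrt_of_neg hx, div_pow, sq_sqrt (neg_nonneg.2 hx.le)]
  field_simp [hx.ne]

theorem sqrt_lt_pi_div_two (hx : x < π ^ 2 / 4) : √x < π / 2 := by
  rw [sqrt_lt' (by positivity)]
  linarith

theorem tendsto_tanSqrtDivSqrt : Tendsto tanSqrtDivSqrt (𝓝[≠] 0) (𝓝 1) := by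
  rw [← nhdsLT_sup_nhdsGT]
  refine Tendsto.sup ?_ ?_
  · have hsqrt : Tendsto (fun x => √(-x)) (𝓝[<] 0) (𝓝[≠] 0) := by
      refine tendsto_nhdsWithin_iff.2 ⟨?_, ?_⟩
      · simpa using (continuous_neg.sqrt.tendsto 0).mono_left nhdsWithin_le_nhds
      · filter_upwards [self_mem_nhdsWithin] with x hx
        exact sqrt_ne_zero'.2 (neg_pos.2 hx)
    refine (tendsto_tanh_div_self.comp hsqrt).congr' ?_
    filter_upwards [self_mem_nhdsWithin] with x hx
    exact (tanSqrtDivSqrt_of_neg hx).symm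
  · have hsqrt : Tendsto (fun x => √x) (𝓝[>] 0) (𝓝[≠] 0) := by
      refine tendsto_nhdsWithin_iff.2 ⟨?_, ?_⟩
      · simpa using (continuous_sqrt.tendsto 0).mono_left nhdsWithin_le_nhds
      · filter_upwards [self_mem_nhdsWithin] with x hx
        exact sqrt_ne_zero'.2 hx
    refine (tendsto_tan_div_self.comp hsqrt).congr' ?_
    filter_upwards [self_mem_nhdsWithin] with x hx
    exact (tanSqrtDivSqrt_of_pos hx).symm

theorem monotoneOn_tanSqrtDivSqrt : MonotoneOn tanSqrtDivSqrt (Iio (π ^ 2 / 4)) := by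
  refine monotoneOn_of_monotoneOn_inter_Iio_Ioi (c := 0) ?_ ?_ ?_ ?_
  · rintro a ⟨-, ha⟩ b ⟨-, hb⟩ hab
    rw [tanSqrtDivSqrt_of_neg ha, tanSqrtDivSqrt_of_neg hb]
    exact antitoneOn_tanh_div_self (sqrt_pos.2 (neg_pos.2 hb)) (sqrt_pos.2 (neg_pos.2 ha))
      (sqrt_le_sqrt (neg_le_neg hab))
  · rintro a ⟨ha', ha⟩ b ⟨hb', hb⟩ hab
    rw [tanSqrtDivSqrt_of_pos ha, tanSqrtDivSqrt_of_pos hb]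
    exact monotoneOn_tan_div_self ⟨sqrt_pos.2 ha, sqrt_lt_pi_div_two ha'⟩
      ⟨sqrt_pos.2 hb, sqrt_lt_pi_div_two hb'⟩ (sqrt_le_sqrt hab)
  · intro x _ hx
    rw [tanSqrtDivSqrt_of_neg hx, tanSqrtDivSqrt_zero, div_le_one (sqrt_pos.2 (neg_pos.2 hx))]
    exact tanh_le_self (sqrt_nonneg _)
  · intro x hx' hx
    rw [tanSqrtDivSqrt_of_pos hx, tanSqrtDivSqrt_zero, one_le_div (sqrt_pos.2 hx)]
    exact (lt_tan (sqrt_pos.2 hx) (sqrt_lt_pi_div_two hx')).le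

theorem monotoneOn_mul_tanSqrtDivSqrt_sq :
    MonotoneOn (fun x => x * tanSqrtDivSqrt x ^ 2) (Iio (π ^ 2 / 4)) := by
  refine monotoneOn_of_monotoneOn_inter_Iio_Ioi (c := 0) ?_ ?_ ?_ ?_
  · rintro a ⟨-, ha⟩ b ⟨-, hb⟩ hab
    simp only [mul_tanSqrtDivSqrt_sq_of_neg ha, mul_tanSqrtDivSqrt_sq_of_neg hb, neg_le_neg_iff]
    gcongr
    · exact tanh_nonneg (sqrt_nonneg _)
    · exact strictMono_tanh.monotone (sqrt_le_sqrt (neg_le_neg hab))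
  · rintro a ⟨ha', ha⟩ b ⟨hb', hb⟩ hab
    simp only [mul_tanSqrtDivSqrt_sq_of_pos ha, mul_tanSqrtDivSqrt_sq_of_pos hb]
    have hpi := pi_pos
    gcongr
    · exact tan_nonneg_of_nonneg_of_le_pi_div_two (sqrt_nonneg a) (sqrt_lt_pi_div_two ha').le
    · exact strictMonoOn_tan.monotoneOn ⟨by linarith [sqrt_nonneg a], sqrt_lt_pi_div_two ha'⟩
        ⟨by linarith [sqrt_nonneg b], sqrt_lt_pi_div_two hb'⟩ (sqrt_le_sqrt hab)
  · intro x _ hx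
    simp [mul_tanSqrtDivSqrt_sq_of_neg hx, sq_nonneg]
  · intro x _ hx
    simp [mul_tanSqrtDivSqrt_sq_of_pos hx, sq_nonneg]

theorem hasDerivAt_mul_tanSqrtDivSqrt_of_neg (hx : x < 0) :
    HasDerivAt (fun y => y * tanSqrtDivSqrt y)
      ((tanSqrtDivSqrt x + 1 + x * tanSqrtDivSqrt x ^ 2) / 2) x := by
  have hs : 0 < √(-x) := sqrt_pos.2 (neg_pos.2 hx)
  have hsqrt : HasDerivAt (fun y => √(-y)) (1 / (2 * √(-x)) * -1) x :=
    (hasDerivAt_sqrt (neg_pos.2 hx).ne').comp x (hasDerivAt_neg x)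
  have hF := (hsqrt.mul ((hasDerivAt_tanh _).comp x hsqrt)).neg
  have heq : (fun y => y * tanSqrtDivSqrt y) =ᶠ[𝓝 x] fun y => -(√(-y) * tanh √(-y)) := by
    filter_upwards [isOpen_Iio.mem_nhds hx] with y hy
    rw [tanSqrtDivSqrt_of_neg hy]
    have := sqrt_pos.2 (neg_pos.2 hy)
    field_simp
    rw [sq_sqrt (neg_nonneg.2 hy.le)]
    ring
  refine (hF.congr_of_eventuallyEq heq).congr_deriv ?_
  rw [mul_tanSqrtDivSqrt_sq_of_neg hx, tanSqrtDivSqrt_of_neg hx, Function.comp_apply]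
  field_simp
  ring

theorem hasDerivAt_mul_tanSqrtDivSqrt_zero :
    HasDerivAt (fun y => y * tanSqrtDivSqrt y) 1 0 := by
  rw [hasDerivAt_iff_tendsto_slope]
  refine tendsto_tanSqrtDivSqrt.congr' ?_
  filter_upwards [self_mem_nhdsWithin] with y (hy : y ≠ 0)
  simp only [slope_def_field, zero_mul, sub_zero]
  field_simp

theorem hasDerivAt_mul_tanSqrtDivSqrt_of_pos (hx₀ : 0 < x) (hx : x < π ^ 2 / 4) :
    HasDerivAt (fun y => y * tanSqrtDivSqrt y)
      ((tanSqrtDivSqrt x + 1 + x * tanSqrtDivSqrt x ^ 2) / 2) x := by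
  have hs : 0 < √x := sqrt_pos.2 hx₀
  have hcos : 0 < cos √x := cos_pos_of_mem_Ioo ⟨by linarith [pi_pos], sqrt_lt_pi_div_two hx⟩
  have hsqrt := hasDerivAt_sqrt hx₀.ne'
  have hF := hsqrt.mul ((hasDerivAt_tan hcos.ne').comp x hsqrt)
  have heq : (fun y => y * tanSqrtDivSqrt y) =ᶠ[𝓝 x] fun y => √y * tan √y := by
    filter_upwards [isOpen_Ioi.mem_nhds hx₀] with y hy
    rw [tanSqrtDivSqrt_of_pos hy]
    have := sqrt_pos.2 hy
    field_simp
    rw [sq_sqrt hy.le]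
    ring
  refine (hF.congr_of_eventuallyEq heq).congr_deriv ?_
  rw [mul_tanSqrtDivSqrt_sq_of_pos hx₀, tanSqrtDivSqrt_of_pos hx₀, Function.comp_apply,
    tan_eq_sin_div_cos]
  field_simp
  linear_combination -√x * sin_sq_add_cos_sq √x

theorem hasDerivAt_mul_tanSqrtDivSqrt (hx : x < π ^ 2 / 4) :
    HasDerivAt (fun y => y * tanSqrtDivSqrt y)
      ((tanSqrtDivSqrt x + 1 + x * tanSqrtDivSqrt x ^ 2) / 2) x := by
  rcases lt_trichotomy x 0 with hneg | rfl | hpos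
  · exact hasDerivAt_mul_tanSqrtDivSqrt_of_neg hneg
  · simpa using hasDerivAt_mul_tanSqrtDivSqrt_zero
  · exact hasDerivAt_mul_tanSqrtDivSqrt_of_pos hpos hx

theorem convexOn_mul_tanSqrtDivSqrt :
    ConvexOn ℝ (Iio (π ^ 2 / 4)) fun x => x * tanSqrtDivSqrt x := by
  have hderiv {x : ℝ} (hx : x ∈ Iio (π ^ 2 / 4)) := hasDerivAt_mul_tanSqrtDivSqrt hx
  refine MonotoneOn.convexOn_of_deriv (convex_Iio _)
    (fun x hx => (hderiv hx).continuousAt.continuousWithinAt)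
    (fun x hx => (hderiv (interior_subset hx)).differentiableAt.differentiableWithinAt) ?_
  rw [interior_Iio]
  intro a ha b hb hab
  rw [(hderiv ha).deriv, (hderiv hb).deriv]
  have := monotoneOn_tanSqrtDivSqrt ha hb hab
  have := monotoneOn_mul_tanSqrtDivSqrt_sq ha hb hab
  dsimp only at *
  linarith

end tanSqrtDivSqrt

section G

variable {r : ℝ}

theorem G_eq_mul_tanSqrtDivSqrt (hr : 0 < r) (k : ℝ) :
    G k r = -(k * r) * tanSqrtDivSqrt (k * r ^ 2 / 4) := by
  rcases lt_trichotomy k 0 with hk | rfl | hk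
  · have hs : 0 < √(-k) := sqrt_pos.2 (neg_pos.2 hk)
    have harg : -(k * r ^ 2 / 4) = (√(-k) * r / 2) ^ 2 := by
      rw [div_pow, mul_pow, sq_sqrt (neg_nonneg.2 hk.le)]; ring
    rw [G, if_neg hk.not_gt, if_neg hk.ne, abs_of_neg hk,
      tanSqrtDivSqrt_of_neg (by nlinarith [pow_pos hr 2]), harg, sqrt_sq (by positivity)]
    field_simp
    rw [sq_sqrt (neg_nonneg.2 hk.le)]
    ring
  · simp [G]
  · have hs : 0 < √k := sqrt_pos.2 hk
    have harg : k * r ^ 2 / 4 = (√k * r / 2) ^ 2 := by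
      rw [div_pow, mul_pow, sq_sqrt hk.le]; ring
    rw [G, if_pos hk, tanSqrtDivSqrt_of_pos (by positivity), harg, sqrt_sq (by positivity)]
    field_simp
    rw [sq_sqrt hk.le]
    ring

theorem G_four_mul (hr : 0 < r) (k : ℝ) : G (4 * k) r = 2 * G k (2 * r) := by
  rw [G_eq_mul_tanSqrtDivSqrt hr, G_eq_mul_tanSqrtDivSqrt (by positivity)]
  ring_nf

theorem concaveOn_G (hr : 0 < r) : ConcaveOn ℝ (Iio (π ^ 2 / r ^ 2)) fun k => G k r := by
  refine ⟨convex_Iio _, fun a ha b hb s t hs ht hst => ?_⟩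
  have hscale {k : ℝ} (hk : k ∈ Iio (π ^ 2 / r ^ 2)) : k * r ^ 2 / 4 ∈ Iio (π ^ 2 / 4) := by
    have := (lt_div_iff₀ (pow_pos hr 2)).1 hk
    simp only [mem_Iio]; linarith
  have hconv := convexOn_mul_tanSqrtDivSqrt.2 (hscale ha) (hscale hb) hs ht hst
  simp only [smul_eq_mul, G_eq_mul_tanSqrtDivSqrt hr] at hconv ⊢
  rw [show s * (a * r ^ 2 / 4) + t * (b * r ^ 2 / 4) = (s * a + t * b) * r ^ 2 / 4 by ring]
    at hconv
  nlinarith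

end G

theorem ConcaveOn.mul_add_mul_le_mul_div {s : Set ℝ} {f : ℝ → ℝ} (hf : ConcaveOn ℝ s f)
    {x y a b : ℝ} (hx : x ∈ s) (hy : y ∈ s) (ha : 0 ≤ a) (hb : 0 ≤ b) (hab : 0 < a + b) :
    a * f x + b * f y ≤ (a + b) * f ((a * x + b * y) / (a + b)) := by
  have := hf.2 hx hy (div_nonneg ha hab.le) (div_nonneg hb hab.le) (by field_simp)
  simp only [smul_eq_mul] at this
  rw [show a / (a + b) * x + b / (a + b) * y = (a * x + b * y) / (a + b) by field_simp] at this
  calc a * f x + b * f y = (a + b) * (a / (a + b) * f x + b / (a + b) * f y) := by field_simp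
    _ ≤ _ := mul_le_mul_of_nonneg_left this hab.le

/-- The quaternion Kähler drift term `(4m−4)G(k₂,r) + 6G(k₁,2r)` is dominated by the
Riemannian drift term with the averaged Ricci lower bound `12k₁ + (4m−4)k₂` in real
dimension `4m`. -/
theorem quaternion_kahler_drift_comparison (m : ℕ) (hm : 2 ≤ m) (k₁ k₂ r : ℝ) (hr : 0 < r)
    (h₁ : 4 * k₁ < π ^ 2 / r ^ 2) (h₂ : k₂ < π ^ 2 / r ^ 2) :
    (4 * (m : ℝ) - 4) * G k₂ r + 6 * G k₁ (2 * r) ≤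
      (4 * (m : ℝ) - 1) * G ((12 * k₁ + (4 * (m : ℝ) - 4) * k₂) / (4 * (m : ℝ) - 1)) r := by
  have hm' : (2 : ℝ) ≤ m := by exact_mod_cast hm
  have hjensen := (concaveOn_G hr).mul_add_mul_le_mul_div h₁ h₂ (a := 3) (b := 4 * m - 4)
    (by norm_num) (by linarith) (by linarith)
  rw [G_four_mul hr, show (3 : ℝ) + (4 * m - 4) = 4 * m - 1 by ring,
    show 3 * (4 * k₁) = 12 * k₁ by ring] at hjensen
  linarith
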